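/- Fix n ≥ 3 and let φ : ℝ^{n+1} → ℝ^{2n−1} be the coefficient map of the n-compartment cycle model. Let p ∈ ℝ^{n+1} have coordinates a_{01}, a_{21}, a_{32}, …, a_{n,n−1}, a_{1n} with a_{32}, …, a_{n,n−1}, a_{1n} pairwise distinct and all nonzero. Then for q ∈ ℝ^{n+1}, one has φ(q) = φ(p) if and only if q has the same first two coordinates a_{01} and a_{21} as p and the remaining n−1 coordinates of q form a permutation of (a_{32}, a_{43}, …, a_{n,n−1}, a_{1n}). -/

import Mathlib

open MvPolynomial

/-- Index `i : Fin (m+3)` recast in `Fin (m+2)` as `i - 1`. -/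
def subOne' {m : ℕ} (i : Fin (m + 3)) : Fin (m + 2) :=
  ⟨i.val - 1, by have := i.isLt; omega⟩

/-- The cycle compartmental matrix with `n = m + 3` compartments. -/
def cycMatrix {R : Type*} [CommRing R] (m : ℕ) (a01 a21 : R) (b : Fin (m + 2) → R) :
    Matrix (Fin (m + 3)) (Fin (m + 3)) R :=
  Matrix.of fun i j =>
    if i = 0 ∧ j = 0 then -a01 - a21
    else if i = 0 ∧ j.val = m + 2 then b (Fin.last (m + 1))
    else if i.val = j.val + 1 then (if j = 0 then a21 else b (subOne' j))
    else if i = j then -(b (subOne' i))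
    else 0

/-- Index type for the `n + 1` parameters of the cycle model (`n = m + 3`):
`.inl 0 ↦ a₀₁`, `.inl 1 ↦ a₂₁`, `.inr k ↦ a_{k+3,k+2}` (with `.inr (m+1) ↦ a_{1n}`). -/
abbrev CycIx (m : ℕ) := Fin 2 ⊕ Fin (m + 2)

/-- The cycle compartmental matrix with the parameters as indeterminates. -/
noncomputable def cycA (m : ℕ) :
    Matrix (Fin (m + 3)) (Fin (m + 3)) (MvPolynomial (CycIx m) ℝ) :=
  cycMatrix m (X (Sum.inl 0)) (X (Sum.inl 1)) (fun k => X (Sum.inr k))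

/-- All `2n - 1` coefficients of the cycle model: `.inl i ↦ c_i`, `.inr i ↦ d_i`,
where `c_i` is the coefficient of `λ^i` in `det (λI - A)` and `d_i` that in
`det (λI - A₁₁)`. -/
noncomputable def cycCoeff (m : ℕ) : Fin (m + 3) ⊕ Fin (m + 2) → MvPolynomial (CycIx m) ℝ :=
  Sum.elim (fun i => (cycA m).charpoly.coeff i.val)
    (fun i => ((cycA m).submatrix Fin.succ Fin.succ).charpoly.coeff i.val)

/-- The coefficient map `φ : ℝ^{n+1} → ℝ^{2n-1}` of the cycle model. -/
noncomputable def cycPhi (m : ℕ) (p : CycIx m → ℝ) : Fin (m + 3) ⊕ Fin (m + 2) → ℝ :=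
  fun s => MvPolynomial.eval p (cycCoeff m s)

/-!
Expanding `det (λI - A)` along its first row, both complementary minors are triangular. With
`b = (a₃₂, …, a_{n,n-1}, a_{1n})` this gives `det (λI - A₁₁) = ∏ₖ (λ + bₖ)` and
`det (λI - A) = (λ + a₀₁ + a₂₁) ∏ₖ (λ + bₖ) - a₂₁ ∏ₖ bₖ`. The `d`-coefficients therefore
determine the multiset of the `bₖ` (its negatives are the roots), and then the `c`-coefficients
determine `a₀₁ + a₂₁` and `a₂₁ ∏ₖ bₖ`; as `∏ₖ bₖ ≠ 0`, they determine `a₂₁` and `a₀₁`.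
-/

open Finset
open scoped Polynomial

theorem Fintype.exists_perm_of_map_univ_val_eq {ι α : Type*} [Fintype ι] {f g : ι → α}
    (h : univ.val.map f = univ.val.map g) : ∃ σ : Equiv.Perm ι, ∀ k, f k = g (σ k) := by
  classical
  have hcard : ∀ c, Fintype.card {k // f k = c} = Fintype.card {k // g k = c} := fun c => by
    simpa [Multiset.count_map, Fintype.card_subtype, Finset.card_def, eq_comm] using
      congrArg (Multiset.count c) h
  exact ⟨Equiv.ofFiberEquiv fun c => Fintype.equivOfCardEq (hcard c),
    fun k => (Equiv.ofFiberEquiv_map _ k).symm⟩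

namespace Polynomial

variable {R : Type*} [CommRing R]

theorem Monic.coeff_fin_eq_iff {p q : R[X]} {n : ℕ} (hp : p.Monic) (hq : q.Monic)
    (hpn : p.natDegree = n) (hqn : q.natDegree = n) :
    (fun i : Fin n => p.coeff i) = (fun i : Fin n => q.coeff i) ↔ p = q := by
  refine ⟨fun h => ext fun i => ?_, fun h => h ▸ rfl⟩
  rcases lt_trichotomy i n with hi | rfl | hi
  · exact congrFun h ⟨i, hi⟩
  · rw [← hpn, hp.coeff_natDegree, hpn, ← hqn, hq.coeff_natDegree]
  · rw [coeff_eq_zero_of_natDegree_lt (hpn ▸ hi), coeff_eq_zero_of_natDegree_lt (hqn ▸ hi)]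

theorem X_add_C_mul_sub_C_inj [IsDomain R] {D : R[X]} (hD : 0 < D.natDegree) {s s' t t' : R} :
    (X + C s) * D - C t = (X + C s') * D - C t' ↔ s = s' ∧ t = t' := by
  refine ⟨fun h => ?_, by rintro ⟨rfl, rfl⟩; rfl⟩
  have key : C (s - s') * D = C (t - t') := by rw [C_sub, C_sub]; linear_combination h
  obtain rfl : s = s' := by
    by_contra hne
    have := congrArg natDegree key
    rw [natDegree_C_mul (sub_ne_zero.2 hne), natDegree_C] at this
    omega
  rw [sub_self, C_0, zero_mul, eq_comm, C_eq_zero, sub_eq_zero] at key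
  exact ⟨rfl, key⟩

theorem roots_prod_X_add_C [IsDomain R] {ι : Type*} (s : Finset ι) (f : ι → R) :
    (∏ k ∈ s, (X + C (f k))).roots = s.val.map fun k => -f k := by
  rw [roots_prod _ _ (prod_ne_zero_iff.2 fun k _ => X_add_C_ne_zero _)]
  simp [roots_X_add_C]

theorem prod_X_add_C_eq_iff_exists_perm [IsDomain R] {ι : Type*} [Fintype ι] {f g : ι → R} :
    ∏ k, (X + C (f k)) = ∏ k, (X + C (g k)) ↔ ∃ σ : Equiv.Perm ι, ∀ k, f k = g (σ k) := by
  refine ⟨fun h => Fintype.exists_perm_of_map_univ_val_eq ?_, fun ⟨σ, hσ⟩ => ?_⟩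
  · have := congrArg roots h
    rw [roots_prod_X_add_C, roots_prod_X_add_C] at this
    simpa using congrArg (Multiset.map Neg.neg) this
  · simp_rw [hσ]
    exact Equiv.prod_comp σ fun k => X + C (g k)

end Polynomial

namespace Matrix

variable {R : Type*} [CommRing R]

theorem charmatrix_submatrix {n k : Type*} [Fintype n] [DecidableEq n] [Fintype k]
    [DecidableEq k] (M : Matrix n n R) {e : k → n} (he : Function.Injective e) :
    charmatrix (M.submatrix e e) = (charmatrix M).submatrix e e := by
  ext i j : 1
  by_cases h : i = j
  · simp [h]
  · simp [charmatrix_apply_ne _ _ _ h, charmatrix_apply_ne _ _ _ (he.ne h)]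

end Matrix

section CycMatrix

open Matrix

variable {R : Type*} [CommRing R] {m : ℕ} (a01 a21 : R) (b : Fin (m + 2) → R)

theorem cycMatrix_zero_zero : cycMatrix m a01 a21 b 0 0 = -a01 - a21 := by
  simp [cycMatrix]

theorem cycMatrix_zero_last :
    cycMatrix m a01 a21 b 0 (Fin.last (m + 2)) = b (Fin.last (m + 1)) := by
  simp [cycMatrix, Fin.ext_iff, -Fin.val_eq_zero_iff]

theorem cycMatrix_zero_of_ne {j : Fin (m + 3)} (h0 : j ≠ 0) (hl : j ≠ Fin.last (m + 2)) :
    cycMatrix m a01 a21 b 0 j = 0 := by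
  have hl' : (j : ℕ) ≠ m + 2 := fun h => hl (Fin.ext h)
  simp [cycMatrix, h0, h0.symm, hl']

theorem cycMatrix_succ_succ_self (i : Fin (m + 2)) :
    cycMatrix m a01 a21 b i.succ i.succ = -b i := by
  simp [cycMatrix, subOne']

theorem cycMatrix_succ_succ_of_lt {i j : Fin (m + 2)} (h : i < j) :
    cycMatrix m a01 a21 b i.succ j.succ = 0 := by
  rw [Fin.lt_def] at h
  simp [cycMatrix, Fin.ext_iff, -Fin.val_eq_zero_iff]
  split_ifs <;> first | rfl | omega

theorem cycMatrix_succ_castSucc_self (i : Fin (m + 2)) :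
    cycMatrix m a01 a21 b i.succ i.castSucc =
      (Fin.cons a21 fun k => b k.castSucc : Fin (m + 2) → R) i := by
  cases i using Fin.cases with
  | zero => simp [cycMatrix]
  | succ k => simp [cycMatrix, subOne', Fin.ext_iff, -Fin.val_eq_zero_iff]; rfl

theorem cycMatrix_succ_castSucc_of_lt {i j : Fin (m + 2)} (h : j < i) :
    cycMatrix m a01 a21 b i.succ j.castSucc = 0 := by
  rw [Fin.lt_def] at h
  simp [cycMatrix, Fin.ext_iff, -Fin.val_eq_zero_iff]
  split_ifs <;> first | rfl | omega


theorem det_charmatrix_cycMatrix_submatrix_succ_succ :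
    ((charmatrix (cycMatrix m a01 a21 b)).submatrix Fin.succ Fin.succ).det
      = ∏ k, (Polynomial.X + Polynomial.C (b k)) := by
  rw [det_of_isLowerTriangular]
  · simp [charmatrix_apply_eq, cycMatrix_succ_succ_self]
  · intro i j (h : i < j)
    rw [submatrix_apply, charmatrix_apply_ne _ _ _ (Fin.succ_injective _ |>.ne h.ne),
      cycMatrix_succ_succ_of_lt _ _ _ h, map_zero, neg_zero]

theorem det_charmatrix_cycMatrix_submatrix_succ_castSucc :
    ((charmatrix (cycMatrix m a01 a21 b)).submatrix Fin.succ Fin.castSucc).det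
      = (-1) ^ (m + 2) * Polynomial.C (a21 * ∏ k : Fin (m + 1), b k.castSucc) := by
  rw [det_of_isUpperTriangular]
  · simp [charmatrix_apply_ne _ _ _ Fin.castSucc_lt_succ.ne', cycMatrix_succ_castSucc_self,
      prod_neg, Fin.prod_univ_succ]
  · intro i j (h : j < i)
    rw [submatrix_apply, charmatrix_apply_ne _ _ _ (by simp [Fin.ext_iff]; omega),
      cycMatrix_succ_castSucc_of_lt _ _ _ h, map_zero, neg_zero]

theorem charpoly_cycMatrix_submatrix :
    ((cycMatrix m a01 a21 b).submatrix Fin.succ Fin.succ).charpoly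
      = ∏ k, (Polynomial.X + Polynomial.C (b k)) := by
  rw [charpoly, charmatrix_submatrix _ (Fin.succ_injective _),
    det_charmatrix_cycMatrix_submatrix_succ_succ]

theorem charpoly_cycMatrix :
    (cycMatrix m a01 a21 b).charpoly
      = (Polynomial.X + Polynomial.C (a01 + a21)) * ∏ k, (Polynomial.X + Polynomial.C (b k))
        - Polynomial.C (a21 * ∏ k, b k) := by
  have h0l : (0 : Fin (m + 3)) ≠ Fin.last (m + 2) := by simp [Fin.ext_iff]
  rw [charpoly, det_succ_row_zero, Fintype.sum_eq_add 0 (Fin.last (m + 2)) h0l fun j hj => by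
      rw [charmatrix_apply_ne _ _ _ (Ne.symm hj.1), cycMatrix_zero_of_ne _ _ _ hj.1 hj.2,
        map_zero, neg_zero, mul_zero, zero_mul]]
  rw [Fin.succAbove_zero, Fin.succAbove_last, det_charmatrix_cycMatrix_submatrix_succ_succ,
    det_charmatrix_cycMatrix_submatrix_succ_castSucc, charmatrix_apply_eq, cycMatrix_zero_zero,
    charmatrix_apply_ne _ _ _ h0l, cycMatrix_zero_last, Fin.prod_univ_castSucc (f := b)]
  simp only [Fin.val_zero, Fin.val_last, pow_zero, one_mul, map_sub, map_neg, map_add, map_mul]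
  have hsign : ((-1 : R[X]) ^ (m + 2)) * (-1) ^ (m + 2) = 1 := by
    rw [← mul_pow, neg_one_mul, neg_neg, one_pow]
  linear_combination
    -(Polynomial.C (b (Fin.last (m + 1))) * Polynomial.C a21 *
      Polynomial.C (∏ k : Fin (m + 1), b k.castSucc)) * hsign

end CycMatrix

section CycPhi

variable {m : ℕ}

theorem map_eval_cycA (p : CycIx m → ℝ) :
    (cycA m).map (eval p) = cycMatrix m (p (.inl 0)) (p (.inl 1)) fun k => p (.inr k) := by
  ext i j : 1
  simp only [cycA, cycMatrix, Matrix.map_apply, Matrix.of_apply, apply_ite (eval p), map_sub,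
    map_neg, eval_X, map_zero]

theorem cycPhi_eq_sumElim (p : CycIx m → ℝ) :
    cycPhi m p = Sum.elim
      (fun i : Fin (m + 3) => ((cycA m).map (eval p)).charpoly.coeff i)
      (fun i : Fin (m + 2) =>
        (((cycA m).map (eval p)).submatrix Fin.succ Fin.succ).charpoly.coeff i) := by
  ext (i | i) <;> simp [cycPhi, cycCoeff, Matrix.charpoly_map, Matrix.submatrix_map]

theorem cycPhi_eq_iff_charpoly_eq (p q : CycIx m → ℝ) :
    cycPhi m q = cycPhi m p ↔
      ((cycA m).map (eval q)).charpoly = ((cycA m).map (eval p)).charpoly ∧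
      (((cycA m).map (eval q)).submatrix Fin.succ Fin.succ).charpoly =
        (((cycA m).map (eval p)).submatrix Fin.succ Fin.succ).charpoly := by
  rw [cycPhi_eq_sumElim, cycPhi_eq_sumElim, Sum.elim_eq_iff]
  exact and_congr
    (Polynomial.Monic.coeff_fin_eq_iff (Matrix.charpoly_monic _) (Matrix.charpoly_monic _)
      (by simp) (by simp))
    (Polynomial.Monic.coeff_fin_eq_iff (Matrix.charpoly_monic _) (Matrix.charpoly_monic _)
      (by simp) (by simp))

end CycPhi

theorem cycPhi_eq_iff_general (m : ℕ) (p : CycIx m → ℝ)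
    (hzero : ∀ k : Fin (m + 2), p (Sum.inr k) ≠ 0)
    (q : CycIx m → ℝ) :
    cycPhi m q = cycPhi m p ↔
      (q (Sum.inl 0) = p (Sum.inl 0) ∧ q (Sum.inl 1) = p (Sum.inl 1) ∧
        ∃ σ : Equiv.Perm (Fin (m + 2)), ∀ k, q (Sum.inr k) = p (Sum.inr (σ k))) := by
  rw [cycPhi_eq_iff_charpoly_eq, map_eval_cycA, map_eval_cycA, charpoly_cycMatrix,
    charpoly_cycMatrix, charpoly_cycMatrix_submatrix, charpoly_cycMatrix_submatrix,
    ← Polynomial.prod_X_add_C_eq_iff_exists_perm (f := fun k => q (.inr k))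
      (g := fun k => p (.inr k)), ← and_assoc]
  refine and_congr_left fun hD => ?_
  have hprod : ∏ k, q (.inr k) = ∏ k, p (.inr k) := by
    simpa [Polynomial.eval_prod] using congrArg (Polynomial.eval 0) hD
  have hdeg : 0 < (∏ k, (Polynomial.X + Polynomial.C (p (.inr k)))).natDegree := by
    rw [Polynomial.natDegree_prod_of_monic _ _ fun k _ => Polynomial.monic_X_add_C _]
    simp
  rw [hD, Polynomial.X_add_C_mul_sub_C_inj hdeg, hprod,
    mul_left_inj' (prod_ne_zero_iff.2 fun k _ => hzero k)]
  exact ⟨fun ⟨hs, h1⟩ => ⟨by linarith, h1⟩, fun ⟨h0, h1⟩ => ⟨by rw [h0, h1], h1⟩⟩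

/-- For the `n`-compartment cycle model (`n = m + 3 ≥ 3`), let
`p ∈ ℝ^{n+1}` have its coordinates `a₃₂, …, a_{n,n-1}, a_{1n}` pairwise distinct and all
nonzero. Then `φ(q) = φ(p)` iff `q` agrees with `p` in the coordinates `a₀₁` and `a₂₁`
and the remaining `n - 1` coordinates of `q` are a permutation of those of `p`. -/
theorem cycPhi_eq_iff (m : ℕ) (p : CycIx m → ℝ)
    (hzero : ∀ k : Fin (m + 2), p (Sum.inr k) ≠ 0)
    (hinj : Function.Injective fun k : Fin (m + 2) => p (Sum.inr k))
    (q : CycIx m → ℝ) :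
    cycPhi m q = cycPhi m p ↔
      (q (Sum.inl 0) = p (Sum.inl 0) ∧ q (Sum.inl 1) = p (Sum.inl 1) ∧
        ∃ σ : Equiv.Perm (Fin (m + 2)), ∀ k, q (Sum.inr k) = p (Sum.inr (σ k))) :=
  cycPhi_eq_iff_general m p hzero q
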